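/- Consider the two-qubit Hamiltonian H(ε) = −X⊗X − Z⊗Z + ε(Z⊗I − I⊗Z) with ε ≥ 0. Then the minimal eigenvalue of H(ε) is min{−2, 1 − √(1 + 4ε²)}; the Bell state |Φ⁺⟩ = (|00⟩ + |11⟩)/√2 satisfies H(ε)|Φ⁺⟩ = −2|Φ⁺⟩ for every ε; and consequently for 0 ≤ ε ≤ √2 the minimal eigenvalue is −2 and |Φ⁺⟩ is a ground state of H(ε). -/
import Mathlib


open Matrix BigOperators
open scoped Kronecker

noncomputable section

/-- The Pauli X matrix. -/
def PX : Matrix (Fin 2) (Fin 2) ℂ := !![0, 1; 1, 0]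
/-- The Pauli Z matrix. -/
def PZ : Matrix (Fin 2) (Fin 2) ℂ := !![1, 0; 0, -1]

/-- The computational basis vector `|00⟩` of `ℂ² ⊗ ℂ²`. -/
def e00 : Fin 2 × Fin 2 → ℂ := fun p => if p = (0, 0) then 1 else 0
/-- The computational basis vector `|11⟩` of `ℂ² ⊗ ℂ²`. -/
def e11 : Fin 2 × Fin 2 → ℂ := fun p => if p = (1, 1) then 1 else 0

/-- The Bell state `|Φ⁺⟩ = (|00⟩ + |11⟩)/√2`. -/
def bell : Fin 2 × Fin 2 → ℂ := ((Real.sqrt 2 : ℂ))⁻¹ • (e00 + e11)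

/-- The perturbed Bell Hamiltonian `H(ε) = −X⊗X − Z⊗Z + ε(Z⊗I − I⊗Z)`. -/
def bellHam (ε : ℝ) : Matrix (Fin 2 × Fin 2) (Fin 2 × Fin 2) ℂ :=
  -(PX ⊗ₖ PX) - PZ ⊗ₖ PZ +
    (ε : ℂ) • (PZ ⊗ₖ (1 : Matrix (Fin 2) (Fin 2) ℂ) - (1 : Matrix (Fin 2) (Fin 2) ℂ) ⊗ₖ PZ)

/-- The minimal eigenvalue `E_gs(H)` of a matrix. -/
def minEig {m : Type} [Fintype m] [DecidableEq m] (H : Matrix m m ℂ) : ℝ :=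
  sInf {E : ℝ | ∃ ψ : m → ℂ, ψ ≠ 0 ∧ H.mulVec ψ = (E : ℂ) • ψ}

lemma ham_mulVec (ε : ℝ) (ψ : Fin 2 × Fin 2 → ℂ) (i j : Fin 2) :
    (bellHam ε).mulVec ψ (i,j) =
      ∑ k : Fin 2, ∑ l : Fin 2, bellHam ε (i,j) (k,l) * ψ (k,l) := by
  simp [Matrix.mulVec, dotProduct, Fintype.sum_prod_type]

lemma ham_00 (ε : ℝ) (ψ : Fin 2 × Fin 2 → ℂ) :
    (bellHam ε).mulVec ψ (0,0) = -ψ (0,0) - ψ (1,1) := by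
  rw [ham_mulVec]; simp [bellHam, PX, PZ, Fin.sum_univ_two, Matrix.one_apply]; try ring_nf; try tauto

lemma ham_01 (ε : ℝ) (ψ : Fin 2 × Fin 2 → ℂ) :
    (bellHam ε).mulVec ψ (0,1) = (1 + 2*ε) * ψ (0,1) - ψ (1,0) := by
  rw [ham_mulVec]; simp [bellHam, PX, PZ, Fin.sum_univ_two, Matrix.one_apply]; try ring_nf; try tauto

lemma ham_10 (ε : ℝ) (ψ : Fin 2 × Fin 2 → ℂ) :
    (bellHam ε).mulVec ψ (1,0) = -ψ (0,1) + (1 - 2*ε) * ψ (1,0) := by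
  rw [ham_mulVec]; simp [bellHam, PX, PZ, Fin.sum_univ_two, Matrix.one_apply]; try ring_nf; try tauto

lemma ham_11 (ε : ℝ) (ψ : Fin 2 × Fin 2 → ℂ) :
    (bellHam ε).mulVec ψ (1,1) = -ψ (0,0) - ψ (1,1) := by
  rw [ham_mulVec]; simp [bellHam, PX, PZ, Fin.sum_univ_two, Matrix.one_apply]; try ring_nf; try tauto

lemma vec_ext (φ χ : Fin 2 × Fin 2 → ℂ) (h0 : φ (0,0) = χ (0,0)) (h1 : φ (0,1) = χ (0,1))
    (h2 : φ (1,0) = χ (1,0)) (h3 : φ (1,1) = χ (1,1)) : φ = χ := by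
  funext p
  obtain ⟨i, j⟩ := p
  fin_cases i <;> fin_cases j <;> assumption

lemma e_vals : e00 (0,0) = 1 ∧ e00 (0,1) = 0 ∧ e00 (1,0) = 0 ∧ e00 (1,1) = 0 ∧
    e11 (0,0) = 0 ∧ e11 (0,1) = 0 ∧ e11 (1,0) = 0 ∧ e11 (1,1) = 1 := by
  refine ⟨?_, ?_, ?_, ?_, ?_, ?_, ?_, ?_⟩ <;> simp [e00, e11]

lemma ham_sum (ε : ℝ) : (bellHam ε).mulVec (e00 + e11) = (-2 : ℂ) • (e00 + e11) := by
  obtain ⟨a1, a2, a3, a4, b1, b2, b3, b4⟩ := e_vals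
  apply vec_ext <;>
    simp only [ham_00, ham_01, ham_10, ham_11, Pi.smul_apply, Pi.add_apply,
      a1, a2, a3, a4, b1, b2, b3, b4, smul_eq_mul] <;> ring

lemma ham_bell (ε : ℝ) : (bellHam ε).mulVec bell = (-2 : ℂ) • bell := by
  unfold bell
  rw [Matrix.mulVec_smul, ham_sum, smul_comm]

def ψ₂ (ε : ℝ) : Fin 2 × Fin 2 → ℂ :=
  fun p => if p = (0,1) then 1 else if p = (1,0) then ((2*ε + Real.sqrt (1 + 4*ε^2) : ℝ) : ℂ) else 0

lemma sq_s (ε : ℝ) : (Real.sqrt (1 + 4*ε^2)) ^ 2 = 1 + 4*ε^2 :=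
  Real.sq_sqrt (by positivity)

lemma ψ₂_vals (ε : ℝ) : ψ₂ ε (0,0) = 0 ∧ ψ₂ ε (0,1) = 1 ∧
    ψ₂ ε (1,0) = ((2*ε + Real.sqrt (1 + 4*ε^2) : ℝ) : ℂ) ∧ ψ₂ ε (1,1) = 0 := by
  refine ⟨?_, ?_, ?_, ?_⟩ <;> simp only [ψ₂] <;>
    first
      | rfl
      | rw [if_neg (by decide), if_neg (by decide)]
      | rw [if_pos (by decide)]
      | rw [if_neg (by decide), if_pos (by decide)]

lemma ham_ψ₂ (ε : ℝ) :
    (bellHam ε).mulVec (ψ₂ ε) = (((1 - Real.sqrt (1 + 4*ε^2) : ℝ)) : ℂ) • ψ₂ ε := by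
  have hs : ((Real.sqrt (1 + 4*ε^2) : ℝ) : ℂ) ^ 2 = 1 + 4*(ε:ℂ)^2 := by
    rw [← Complex.ofReal_pow, sq_s]; push_cast; ring
  obtain ⟨v1, v2, v3, v4⟩ := ψ₂_vals ε
  apply vec_ext <;>
    simp only [ham_00, ham_01, ham_10, ham_11, Pi.smul_apply, v1, v2, v3, v4, smul_eq_mul] <;>
    push_cast <;>
    first
      | ring1
      | linear_combination hs
      | linear_combination -hs
      | linear_combination 2*hs


/-- spectrum and Bell ground state of the perturbed Bell
Hamiltonian. -/
theorem bellHam_ground_state (ε : ℝ) (hε : 0 ≤ ε) :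
    minEig (bellHam ε) = min (-2 : ℝ) (1 - Real.sqrt (1 + 4 * ε ^ 2)) ∧
    (bellHam ε).mulVec bell = (-2 : ℂ) • bell ∧
    (ε ≤ Real.sqrt 2 → minEig (bellHam ε) = -2) := by
  set s := Real.sqrt (1 + 4 * ε ^ 2) with hs_def
  have hs0 : 0 ≤ s := Real.sqrt_nonneg _
  have hs2 : s ^ 2 = 1 + 4 * ε ^ 2 := sq_s ε
  set S := {E : ℝ | ∃ ψ : Fin 2 × Fin 2 → ℂ, ψ ≠ 0 ∧
      (bellHam ε).mulVec ψ = (E : ℂ) • ψ} with hS_def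
  have hm2 : (-2 : ℝ) ∈ S := by
    refine ⟨e00 + e11, ?_, ?_⟩
    · intro h
      have := congrFun h (0,0)
      simp [e00, e11] at this
    · exact_mod_cast ham_sum ε
  have hm1 : (1 - s) ∈ S := by
    refine ⟨ψ₂ ε, ?_, ?_⟩
    · intro h
      have := congrFun h (0,1)
      simp [ψ₂] at this
    · exact_mod_cast ham_ψ₂ ε
  have hlb : ∀ E ∈ S, min (-2 : ℝ) (1 - s) ≤ E := by
    rintro E ⟨ψ, hψ, heq⟩
    set a := ψ (0,0) with ha_def; set b := ψ (0,1) with hb_def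
    set c := ψ (1,0) with hc_def; set d := ψ (1,1) with hd_def
    have h1 : -a - d = (E : ℂ) * a := by
      have := congrFun heq (0,0); rwa [ham_00, Pi.smul_apply, smul_eq_mul] at this
    have h2 : (1 + 2*(ε:ℂ)) * b - c = (E : ℂ) * b := by
      have := congrFun heq (0,1); rwa [ham_01, Pi.smul_apply, smul_eq_mul] at this
    have h3 : -b + (1 - 2*(ε:ℂ)) * c = (E : ℂ) * c := by
      have := congrFun heq (1,0); rwa [ham_10, Pi.smul_apply, smul_eq_mul] at this
    have h4 : -a - d = (E : ℂ) * d := by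
      have := congrFun heq (1,1); rwa [ham_11, Pi.smul_apply, smul_eq_mul] at this
    have key : E = 0 ∨ E = -2 ∨ (E - 1) ^ 2 = 1 + 4 * ε ^ 2 := by
      by_cases had : a = 0 ∧ d = 0
      · obtain ⟨ha, hd⟩ := had
        have hb : b ≠ 0 := by
          intro hb
          have hc : c = 0 := by
            have h2' := h2; rw [hb] at h2'; simpa using h2'.symm
          apply hψ
          apply vec_ext
          · simpa using ha
          · simpa using hb
          · simpa using hc
          · simpa using hd
        have hcv : c = (1 + 2*(ε:ℂ) - E) * b := by linear_combination -h2
        have h3' : -b + (1 - 2*(ε:ℂ)) * ((1 + 2*(ε:ℂ) - E) * b)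
            = (E : ℂ) * ((1 + 2*(ε:ℂ) - E) * b) := by rw [← hcv]; exact h3
        have hEq : ((E : ℂ) - 1) ^ 2 = 1 + 4 * (ε:ℂ) ^ 2 :=
          mul_right_cancel₀ hb (by linear_combination h3' :
            (((E:ℂ) - 1) ^ 2) * b = (1 + 4 * (ε:ℂ) ^ 2) * b)
        right; right
        exact_mod_cast hEq
      · by_cases hE : E = 0
        · left; exact hE
        · right; left
          have hEC : (E : ℂ) ≠ 0 := by exact_mod_cast hE
          have had2 : a = d := by
            have : (E : ℂ) * a = (E : ℂ) * d := by rw [← h1, ← h4]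
            exact mul_left_cancel₀ hEC this
          have ha : a ≠ 0 := fun ha => had ⟨ha, had2 ▸ ha⟩
          have hE2 : (E : ℂ) = -2 := by
            have h1' : (-2 : ℂ) * a = (E : ℂ) * a := by linear_combination h1 - had2
            exact (mul_right_cancel₀ ha h1').symm
          exact_mod_cast hE2
    rcases key with h | h | h
    · subst h; exact le_trans (min_le_left _ _) (by norm_num)
    · subst h; exact min_le_left _ _
    · have habs : |E - 1| = s := by
        rw [← Real.sqrt_sq_eq_abs, h, hs_def]
      rcases (abs_eq hs0).mp habs with h' | h'
      · calc min (-2:ℝ) (1-s) ≤ 1 - s := min_le_right _ _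
          _ ≤ E := by linarith
      · have hE : E = 1 - s := by linarith
        rw [hE]; exact min_le_right _ _
  have hbdd : BddBelow S := ⟨min (-2 : ℝ) (1 - s), hlb⟩
  have hmin_mem : min (-2 : ℝ) (1 - s) ∈ S := by
    rcases le_total (-2 : ℝ) (1 - s) with h | h
    · rwa [min_eq_left h]
    · rwa [min_eq_right h]
  have hinf : minEig (bellHam ε) = min (-2 : ℝ) (1 - s) :=
    le_antisymm (csInf_le hbdd hmin_mem) (le_csInf ⟨-2, hm2⟩ hlb)
  refine ⟨hinf, ham_bell ε, fun hle => ?_⟩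
  have hε2 : ε ^ 2 ≤ 2 := by
    nlinarith [Real.sq_sqrt (by norm_num : (0:ℝ) ≤ 2), Real.sqrt_nonneg 2]
  have hs3 : s ≤ 3 := by
    rw [hs_def]
    calc Real.sqrt (1 + 4 * ε ^ 2) ≤ Real.sqrt 9 := Real.sqrt_le_sqrt (by nlinarith)
      _ = 3 := by rw [show (9:ℝ) = 3^2 by norm_num, Real.sqrt_sq (by norm_num : (0:ℝ) ≤ 3)]
  rw [hinf, min_eq_left (by linarith)]
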